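/- arXiv:1810.03587 — 8 statements merged into one kernel-verified Lean document; each statement's English description precedes it below -/
import Mathlib

section
/- Let F : ℝⁿ → ℝ be differentiable with gradient ∇F satisfying restricted strong smoothness over a set S ⊆ ℝⁿ with constant β > 0, let P be an ε-approximate projection onto S, let x, x* ∈ S, set z = x - (1/β)∇F(x) and x⁺ = P(z). Then F(x⁺) - F(x) ≤ (β/2)‖x* - x‖² + ⟪∇F(x), x* - x⟫ + βε/2. -/
open RealInnerProductSpace

/-- With RSS over `S` (constant `β > 0`), an `ε`-approximate projection `P`
onto `S`, `x, x* ∈ S`, `z = x - (1/β)∇F(x)` and `x⁺ = P z`, we have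
`F x⁺ - F x ≤ (β/2)‖x* - x‖² + ⟪∇F(x), x* - x⟫ + βε/2`. -/
theorem rss_approx_projection_step {n : ℕ}
    (F : EuclideanSpace ℝ (Fin n) → ℝ)
    (gradF : EuclideanSpace ℝ (Fin n) → EuclideanSpace ℝ (Fin n))
    (hgrad : ∀ x, HasGradientAt F (gradF x) x)
    (S : Set (EuclideanSpace ℝ (Fin n)))
    (β : ℝ) (hβ : 0 < β)
    (hRSS : ∀ x ∈ S, ∀ y ∈ S,
      F y - F x - ⟪gradF x, y - x⟫ ≤ β / 2 * ‖y - x‖ ^ 2)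
    (ε : ℝ) (hε : 0 ≤ ε)
    (P : EuclideanSpace ℝ (Fin n) → EuclideanSpace ℝ (Fin n))
    (hP : ∀ w, P w ∈ S ∧ ∀ s ∈ S, ‖w - P w‖ ^ 2 ≤ ‖w - s‖ ^ 2 + ε)
    (x xstar : EuclideanSpace ℝ (Fin n)) (hx : x ∈ S) (hxstar : xstar ∈ S)
    (z xplus : EuclideanSpace ℝ (Fin n))
    (hz : z = x - (1 / β) • gradF x) (hxplus : xplus = P z) :
    F xplus - F x ≤
      β / 2 * ‖xstar - x‖ ^ 2 + ⟪gradF x, xstar - x⟫ + β * ε / 2 := by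
  have key : ∀ y : EuclideanSpace ℝ (Fin n),
      ⟪gradF x, y - x⟫ + β / 2 * ‖y - x‖ ^ 2
        = β / 2 * ‖z - y‖ ^ 2 - 1 / (2 * β) * ‖gradF x‖ ^ 2 := by
    intro y
    have hzy : z - y = (x - y) - (1 / β) • gradF x := by rw [hz]; abel
    have h1 : ⟪gradF x, y - x⟫ = -⟪x - y, gradF x⟫ := by
      rw [real_inner_comm]
      have : y - x = -(x - y) := by abel
      rw [this, inner_neg_left]
    have h2 : ‖y - x‖ = ‖x - y‖ := by rw [norm_sub_rev]
    have hb : |(1:ℝ)/β| = 1/β := abs_of_pos (by positivity)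
    have expand : ‖(x - y) - (1 / β) • gradF x‖ ^ 2
        = ‖x - y‖ ^ 2 - 2 * ((1/β) * ⟪x - y, gradF x⟫) + (1/β)^2 * ‖gradF x‖ ^ 2 := by
      rw [@norm_sub_sq_real, real_inner_smul_right, norm_smul, Real.norm_eq_abs, hb]
      ring
    rw [hzy, expand, h1, h2]
    field_simp
    ring
  have hP' := hP z
  obtain ⟨hmem, hproj⟩ := hP'
  have hrss := hRSS x hx xplus (hxplus ▸ hmem)
  have h3 : ‖z - xplus‖ ^ 2 ≤ ‖z - xstar‖ ^ 2 + ε := hxplus ▸ hproj xstar hxstar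
  have e1 := key xplus
  have e2 := key xstar
  nlinarith [norm_nonneg (gradF x), sq_nonneg ‖gradF x‖]
end

section
/- Let F : ℝⁿ → ℝ be differentiable with gradient ∇F satisfying restricted strong convexity with constant α > 0 and restricted strong smoothness with constant β ≥ α over a set S ⊆ ℝⁿ, and let P be an ε-approximate projection onto S. Suppose x* ∈ S is a minimizer of F over S with ‖∇F(x*)‖ ≤ γ, and the diameter of S is at most Δ. Then for any x ∈ S, the projected gradient descent update x⁺ = P(x - (1/β)∇F(x)) satisfies F(x⁺) - F(x*) ≤ (β/α - 1)(F(x) - F(x*)) + ((β - α)/α)·γΔ + βε/2. -/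
set_option maxHeartbeats 1000000


open RealInnerProductSpace

/-- One iteration of `ε`-PGD under RSC/RSS over `S` with constants
`0 < α ≤ β`, minimizer `x*` of `F` over `S` with `‖∇F(x*)‖ ≤ γ`, and `diam S ≤ Δ`:
`F(x⁺) - F(x*) ≤ (β/α - 1)(F(x) - F(x*)) + ((β - α)/α)·γΔ + βε/2`. -/
theorem epsPGD_one_step {n : ℕ}
    (F : EuclideanSpace ℝ (Fin n) → ℝ)
    (gradF : EuclideanSpace ℝ (Fin n) → EuclideanSpace ℝ (Fin n))
    (hgrad : ∀ x, HasGradientAt F (gradF x) x)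
    (S : Set (EuclideanSpace ℝ (Fin n)))
    (α β : ℝ) (hα : 0 < α) (hαβ : α ≤ β)
    (hRSC : ∀ x ∈ S, ∀ y ∈ S,
      α / 2 * ‖y - x‖ ^ 2 ≤ F y - F x - ⟪gradF x, y - x⟫)
    (hRSS : ∀ x ∈ S, ∀ y ∈ S,
      F y - F x - ⟪gradF x, y - x⟫ ≤ β / 2 * ‖y - x‖ ^ 2)
    (ε : ℝ) (hε : 0 ≤ ε)
    (P : EuclideanSpace ℝ (Fin n) → EuclideanSpace ℝ (Fin n))
    (hP : ∀ w, P w ∈ S ∧ ∀ s ∈ S, ‖w - P w‖ ^ 2 ≤ ‖w - s‖ ^ 2 + ε)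
    (xstar : EuclideanSpace ℝ (Fin n)) (hxstar : xstar ∈ S)
    (hmin : ∀ x ∈ S, F xstar ≤ F x)
    (γ Δ : ℝ) (hγ : ‖gradF xstar‖ ≤ γ)
    (hΔ : ∀ a ∈ S, ∀ b ∈ S, ‖a - b‖ ≤ Δ)
    (x : EuclideanSpace ℝ (Fin n)) (hx : x ∈ S) :
    F (P (x - (1 / β) • gradF x)) - F xstar ≤
      (β / α - 1) * (F x - F xstar) + (β - α) / α * (γ * Δ) + β * ε / 2 := by

  have hβ : 0 < β := hα.trans_le hαβ
  set g := gradF x with hg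
  set w := x - (1 / β) • g with hw
  set xp := P w with hxp
  have hxpS : xp ∈ S := (hP w).1
  have hproj : ‖w - xp‖ ^ 2 ≤ ‖w - xstar‖ ^ 2 + ε := (hP w).2 xstar hxstar
  have hRSS1 : F xp - F x - ⟪g, xp - x⟫ ≤ β / 2 * ‖xp - x‖ ^ 2 := hRSS x hx xp hxpS
  have hRSC1 : α / 2 * ‖xstar - x‖ ^ 2 ≤ F xstar - F x - ⟪g, xstar - x⟫ := hRSC x hx xstar hxstar
  have hRSC2 : α / 2 * ‖x - xstar‖ ^ 2 ≤ F x - F xstar - ⟪gradF xstar, x - xstar⟫ :=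
    hRSC xstar hxstar x hx
  have expand : ∀ (a b : EuclideanSpace ℝ (Fin n)) (t : ℝ),
      ‖a + t • b‖ ^ 2 = ‖a‖ ^ 2 + 2 * t * ⟪a, b⟫ + t ^ 2 * ‖b‖ ^ 2 := by
    intro a b t
    rw [norm_add_sq_real, real_inner_smul_right, norm_smul]
    simp [mul_pow, sq_abs]
    ring
  have hv1 : w - xp = -((xp - x) + (1 / β) • g) := by rw [hw]; module
  have hv2 : w - xstar = (x - xstar) + (-(1 / β)) • g := by rw [hw]; module
  have e1 : ‖w - xp‖ ^ 2 = ‖xp - x‖ ^ 2 + 2 * (1 / β) * ⟪xp - x, g⟫ + (1 / β) ^ 2 * ‖g‖ ^ 2 := by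
    rw [hv1, norm_neg, expand]
  have e2 : ‖w - xstar‖ ^ 2 =
      ‖x - xstar‖ ^ 2 + 2 * (-(1 / β)) * ⟪x - xstar, g⟫ + (-(1 / β)) ^ 2 * ‖g‖ ^ 2 := by
    rw [hv2, expand]
  have hcomm1 : ⟪g, xp - x⟫ = ⟪xp - x, g⟫ := real_inner_comm _ _
  have hcomm2 : ⟪g, xstar - x⟫ = -⟪x - xstar, g⟫ := by
    rw [real_inner_comm, ← neg_sub x xstar, inner_neg_left]
  have hnrev : ‖xstar - x‖ = ‖x - xstar‖ := norm_sub_rev _ _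
  -- Step 1 : F xp - F xstar ≤ (β - α)/2 * ‖x - xstar‖^2 + β*ε/2
  have key : F xp - F xstar ≤ (β - α) / 2 * ‖x - xstar‖ ^ 2 + β * ε / 2 := by
    have hb2 : (0:ℝ) < β / 2 := by linarith
    have hm := mul_le_mul_of_nonneg_left hproj hb2.le
    rw [hnrev] at hRSC1
    rw [hcomm1] at hRSS1
    rw [hcomm2] at hRSC1
    rw [e1] at hm
    rw [e2] at hm
    have hβne : β ≠ 0 := ne_of_gt hβ
    have hid : β / 2 * (‖xp - x‖ ^ 2 + 2 * (1 / β) * ⟪xp - x, g⟫ + (1 / β) ^ 2 * ‖g‖ ^ 2)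
        = β / 2 * ‖xp - x‖ ^ 2 + ⟪xp - x, g⟫ + ‖g‖ ^ 2 / (2 * β) := by
      field_simp
    have hid2 : β / 2 * (‖x - xstar‖ ^ 2 + 2 * (-(1 / β)) * ⟪x - xstar, g⟫
          + (-(1 / β)) ^ 2 * ‖g‖ ^ 2 + ε)
        = β / 2 * ‖x - xstar‖ ^ 2 - ⟪x - xstar, g⟫ + ‖g‖ ^ 2 / (2 * β) + β * ε / 2 := by
      field_simp; ring
    rw [hid, hid2] at hm
    linarith
  -- Step 2 : α/2 * ‖x - xstar‖^2 ≤ (F x - F xstar) + γ * Δ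
  have hcs : -⟪gradF xstar, x - xstar⟫ ≤ γ * Δ := by
    have h1 := abs_real_inner_le_norm (gradF xstar) (x - xstar)
    have hD : ‖x - xstar‖ ≤ Δ := hΔ x hx xstar hxstar
    calc -⟪gradF xstar, x - xstar⟫ ≤ |⟪gradF xstar, x - xstar⟫| := neg_le_abs _
      _ ≤ ‖gradF xstar‖ * ‖x - xstar‖ := h1
      _ ≤ γ * Δ := mul_le_mul hγ hD (norm_nonneg _) ((norm_nonneg _).trans hγ)
  have h7 : α / 2 * ‖x - xstar‖ ^ 2 ≤ (F x - F xstar) + γ * Δ := by linarith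
  have hcn : (0:ℝ) ≤ (β - α) / α := div_nonneg (by linarith) hα.le
  have h8 := mul_le_mul_of_nonneg_left h7 hcn
  have hαne : α ≠ 0 := ne_of_gt hα
  have hid3 : (β - α) / α * (α / 2 * ‖x - xstar‖ ^ 2) = (β - α) / 2 * ‖x - xstar‖ ^ 2 := by
    field_simp
  have hid4 : (β - α) / α * ((F x - F xstar) + γ * Δ)
      = (β / α - 1) * (F x - F xstar) + (β - α) / α * (γ * Δ) := by
    field_simp
  rw [hid3, hid4] at h8
  linarith
end

section
/- Let U, V ⊆ ℝⁿ be μ-incoherent with 0 < μ < 1. Then for all u, u' ∈ U and v, v' ∈ V, |⟪u - u', v - v'⟫| ≤ (μ/(2(1 - μ)))·‖(u + v) - (u' + v')‖². -/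
open RealInnerProductSpace

/-- If `U, V` are `μ`-incoherent with `0 < μ < 1`, then
`|⟪u - u', v - v'⟫| ≤ (μ/(2(1 - μ))) ‖(u + v) - (u' + v')‖²`. -/
theorem incoherence_cross_term_bound {n : ℕ}
    (U V : Set (EuclideanSpace ℝ (Fin n)))
    (μ : ℝ) (hμ0 : 0 < μ) (hμ1 : μ < 1)
    (hinc : ∀ u ∈ U, ∀ u' ∈ U, ∀ v ∈ V, ∀ v' ∈ V,
      |⟪u - u', v - v'⟫| ≤ μ * ‖u - u'‖ * ‖v - v'‖)
    (u u' : EuclideanSpace ℝ (Fin n)) (hu : u ∈ U) (hu' : u' ∈ U)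
    (v v' : EuclideanSpace ℝ (Fin n)) (hv : v ∈ V) (hv' : v' ∈ V) :
    |⟪u - u', v - v'⟫| ≤ μ / (2 * (1 - μ)) * ‖(u + v) - (u' + v')‖ ^ 2 := by
  set a := u - u'
  set b := v - v'
  have hab : (u + v) - (u' + v') = a + b := by simp [a, b]; abel
  have hbound : |⟪a, b⟫| ≤ μ * ‖a‖ * ‖b‖ := hinc u hu u' hu' v hv v' hv'
  have hx : (0:ℝ) ≤ ‖a‖ := norm_nonneg _
  have hy : (0:ℝ) ≤ ‖b‖ := norm_nonneg _
  have hsq : ‖a + b‖ ^ 2 = ‖a‖ ^ 2 + 2 * ⟪a, b⟫ + ‖b‖ ^ 2 := norm_add_sq_real a b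
  have hlow : 2 * (1 - μ) * (‖a‖ * ‖b‖) ≤ ‖a + b‖ ^ 2 := by
    have h1 : -(μ * ‖a‖ * ‖b‖) ≤ ⟪a, b⟫ := neg_le_of_abs_le hbound
    nlinarith [sq_nonneg (‖a‖ - ‖b‖)]
  have h1μ : (0:ℝ) < 1 - μ := by linarith
  have hc : (0:ℝ) ≤ μ / (2 * (1 - μ)) := by positivity
  calc |⟪a, b⟫| ≤ μ * ‖a‖ * ‖b‖ := hbound
    _ = μ / (2 * (1 - μ)) * (2 * (1 - μ) * (‖a‖ * ‖b‖)) := by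
        field_simp
    _ ≤ μ / (2 * (1 - μ)) * ‖a + b‖ ^ 2 := by
        exact mul_le_mul_of_nonneg_left hlow hc
    _ = μ / (2 * (1 - μ)) * ‖(u + v) - (u' + v')‖ ^ 2 := by rw [hab]
end

section
/- Let U, V ⊆ ℝⁿ be μ-incoherent with 0 < μ < 1, let u, u' ∈ U, v, v' ∈ V, and let x* ∈ ℝⁿ be arbitrary. Then |⟪u - u', v - v'⟫| ≤ (μ/(1 - μ))·(‖(u + v) - x*‖² + ‖(u' + v') - x*‖²). -/
open RealInnerProductSpace

/-- If `U, V` are `μ`-incoherent with `0 < μ < 1`, then for any `x*`,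
`|⟪u - u', v - v'⟫| ≤ (μ/(1 - μ)) (‖(u + v) - x*‖² + ‖(u' + v') - x*‖²)`. -/
theorem incoherence_cross_term_split_bound {n : ℕ}
    (U V : Set (EuclideanSpace ℝ (Fin n)))
    (μ : ℝ) (hμ0 : 0 < μ) (hμ1 : μ < 1)
    (hinc : ∀ u ∈ U, ∀ u' ∈ U, ∀ v ∈ V, ∀ v' ∈ V,
      |⟪u - u', v - v'⟫| ≤ μ * ‖u - u'‖ * ‖v - v'‖)
    (u u' : EuclideanSpace ℝ (Fin n)) (hu : u ∈ U) (hu' : u' ∈ U)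
    (v v' : EuclideanSpace ℝ (Fin n)) (hv : v ∈ V) (hv' : v' ∈ V)
    (xstar : EuclideanSpace ℝ (Fin n)) :
    |⟪u - u', v - v'⟫| ≤
      μ / (1 - μ) * (‖(u + v) - xstar‖ ^ 2 + ‖(u' + v') - xstar‖ ^ 2) := by
  set a := u - u'
  set b := v - v'
  have hab := hinc u hu u' hu' v hv v' hv'
  have hna : (0:ℝ) ≤ ‖a‖ := norm_nonneg _
  have hnb : (0:ℝ) ≤ ‖b‖ := norm_nonneg _
  -- inner bound via AM-GM
  have h1 : |⟪a, b⟫| ≤ μ / 2 * (‖a‖ ^ 2 + ‖b‖ ^ 2) := by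
    nlinarith [sq_nonneg (‖a‖ - ‖b‖)]
  -- norm of sum lower bound
  have hsum : ‖a + b‖ ^ 2 = ‖a‖ ^ 2 + 2 * ⟪a, b⟫ + ‖b‖ ^ 2 := by
    rw [@norm_add_sq_real]
  have habs : -|⟪a, b⟫| ≤ ⟪a, b⟫ := neg_abs_le _
  have h2 : (1 - μ) * (‖a‖ ^ 2 + ‖b‖ ^ 2) ≤ ‖a + b‖ ^ 2 := by
    nlinarith
  -- a + b = X - Y
  have hX : a + b = ((u + v) - xstar) - ((u' + v') - xstar) := by
    simp only [a, b]; abel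
  have h3 : ‖a + b‖ ^ 2 ≤ 2 * (‖(u + v) - xstar‖ ^ 2 + ‖(u' + v') - xstar‖ ^ 2) := by
    rw [hX]
    have ht := norm_sub_le ((u + v) - xstar) ((u' + v') - xstar)
    have ht2 := pow_le_pow_left₀ (norm_nonneg _) ht 2
    nlinarith [sq_nonneg (‖(u + v) - xstar‖ - ‖(u' + v') - xstar‖)]
  have hμ' : 0 < 1 - μ := by linarith
  rw [div_mul_eq_mul_div, le_div_iff₀ hμ']
  nlinarith [abs_nonneg ⟪a, b⟫]
end

section
/- Let U, V ⊆ ℝⁿ, let P be an ε-approximate projection onto U, and let Q : ℝⁿ → ℝⁿ be an exact projection onto V, i.e., Q(w) ∈ V and ‖w - Q(w)‖ ≤ ‖w - v‖ for all v ∈ V and all w. Let u_t ∈ U, v_t ∈ V, x_t = u_t + v_t, let g ∈ ℝⁿ, and define z_t = x_t - g, u_{t+1} = P(u_t - g), v_{t+1} = Q(v_t - g), x_{t+1} = u_{t+1} + v_{t+1}. Then for any u* ∈ U, v* ∈ V with x* = u* + v*: ‖x_{t+1} - z_t‖² ≤ ‖x* - z_t‖² + ε + 2⟪u_{t+1} -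 u_t, v_{t+1} - v_t⟫ - 2⟪u* - u_t, v* - v_t⟫. -/
open RealInnerProductSpace

lemma myopic_key {E : Type*} [NormedAddCommGroup E] [InnerProductSpace ℝ E]
    (a b u v g : E) :
    ‖(u + v) - ((a + b) - g)‖ ^ 2
      = ‖(a - g) - u‖ ^ 2 + ‖(b - g) - v‖ ^ 2 - ‖g‖ ^ 2 + 2 * ⟪u - a, v - b⟫ := by
  simp only [← real_inner_self_eq_norm_sq, inner_sub_left, inner_sub_right,
    inner_add_left, inner_add_right, real_inner_comm a u, real_inner_comm b v,
    real_inner_comm a v, real_inner_comm b u, real_inner_comm g u,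
    real_inner_comm g v, real_inner_comm g a, real_inner_comm g b,
    real_inner_comm v u, real_inner_comm b a]
  ring

/-- Myopic update distance bound: with `P` an `ε`-approximate projection
onto `U`, `Q` an exact projection onto `V`, `x_t = u_t + v_t`, `z_t = x_t - g`,
`u_{t+1} = P (u_t - g)`, `v_{t+1} = Q (v_t - g)`, `x_{t+1} = u_{t+1} + v_{t+1}`,
for any `u* ∈ U`, `v* ∈ V`, `x* = u* + v*`:
`‖x_{t+1} - z_t‖² ≤ ‖x* - z_t‖² + ε + 2⟪u_{t+1} - u_t, v_{t+1} - v_t⟫ - 2⟪u* - u_t, v* - v_t⟫`. -/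
theorem myopic_update_distance_bound {n : ℕ}
    (U V : Set (EuclideanSpace ℝ (Fin n)))
    (ε : ℝ) (hε : 0 ≤ ε)
    (P Q : EuclideanSpace ℝ (Fin n) → EuclideanSpace ℝ (Fin n))
    (hP : ∀ w, P w ∈ U ∧ ∀ s ∈ U, ‖w - P w‖ ^ 2 ≤ ‖w - s‖ ^ 2 + ε)
    (hQ : ∀ w, Q w ∈ V ∧ ∀ s ∈ V, ‖w - Q w‖ ≤ ‖w - s‖)
    (ut vt : EuclideanSpace ℝ (Fin n)) (hut : ut ∈ U) (hvt : vt ∈ V)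
    (g : EuclideanSpace ℝ (Fin n))
    (xt zt ut1 vt1 xt1 : EuclideanSpace ℝ (Fin n))
    (hxt : xt = ut + vt) (hzt : zt = xt - g)
    (hut1 : ut1 = P (ut - g)) (hvt1 : vt1 = Q (vt - g)) (hxt1 : xt1 = ut1 + vt1)
    (ustar vstar xstar : EuclideanSpace ℝ (Fin n))
    (hustar : ustar ∈ U) (hvstar : vstar ∈ V) (hxstar : xstar = ustar + vstar) :
    ‖xt1 - zt‖ ^ 2 ≤ ‖xstar - zt‖ ^ 2 + ε
      + 2 * ⟪ut1 - ut, vt1 - vt⟫ - 2 * ⟪ustar - ut, vstar - vt⟫ := by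
  have h1 : ‖(ut - g) - ut1‖ ^ 2 ≤ ‖(ut - g) - ustar‖ ^ 2 + ε := by
    rw [hut1]; exact (hP (ut - g)).2 ustar hustar
  have h2 : ‖(vt - g) - vt1‖ ^ 2 ≤ ‖(vt - g) - vstar‖ ^ 2 := by
    have := (hQ (vt - g)).2 vstar hvstar
    rw [hvt1]
    exact pow_le_pow_left₀ (norm_nonneg _) this 2
  rw [hzt, hxt, hxt1, hxstar, myopic_key ut vt ut1 vt1 g, myopic_key ut vt ustar vstar g]
  linarith
end

section
/- Let U, V ⊆ ℝⁿ be μ-incoherent with 0 < μ < 1, and let F : ℝⁿ → ℝ be differentiable with gradient ∇F satisfying restricted strong convexity with constant α > 0 over the Minkowski sum U ⊕ V. Let x* = u* + v* (u* ∈ U, v* ∈ V) satisfy ‖∇F(x*)‖ ≤ γ and F(x*) ≤ F(x) for all x ∈ U ⊕ V, and suppose ‖x - x*‖ ≤ Δ for all x ∈ U ⊕ V. Then for any u_t, u_{t+1} ∈ U, v_t, v_{t+1} ∈ V with x_t = u_t + v_t and x_{t+1} = u_{t+1} + v_{t+1}: β·(⟪u_{t+1} - u_t, v_{t+1} - v_t⟫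 - ⟪u* - u_t, v* - v_t⟫) ≤ (βμ/(α(1-μ)))·(3(F(x_t) - F(x*)) + 2(F(x_{t+1}) - F(x*)) + 5γΔ) for any β > 0. -/
open RealInnerProductSpace

private lemma cross_aux {n : ℕ} (μ : ℝ) (hμ0 : 0 < μ) (hμ1 : μ < 1)
    (u u' v v' : EuclideanSpace ℝ (Fin n))
    (h : |⟪u - u', v - v'⟫| ≤ μ * ‖u - u'‖ * ‖v - v'‖) :
    2 * (1 - μ) * |⟪u - u', v - v'⟫| ≤ μ * ‖(u + v) - (u' + v')‖ ^ 2 := by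
  have hx : (u + v) - (u' + v') = (u - u') + (v - v') := by abel
  rw [hx, @norm_add_sq_real]
  have habs := abs_le.mp (le_refl |⟪u - u', v - v'⟫|)
  nlinarith [sq_nonneg (‖u - u'‖ - ‖v - v'‖), habs.1, habs.2, h,
    norm_nonneg (u - u'), norm_nonneg (v - v')]

/-- Bound on the cross term `𝕋₂` in the Myopic ε-PGD analysis: under
`μ`-incoherence of `U, V` and RSC of `F` over the Minkowski sum `U ⊕ V` with constant `α`,
with `x* = u* + v*` a minimizer satisfying `‖∇F(x*)‖ ≤ γ` and `‖x - x*‖ ≤ Δ` on `U ⊕ V`,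
`β(⟪u_{t+1} - u_t, v_{t+1} - v_t⟫ - ⟪u* - u_t, v* - v_t⟫)
  ≤ (βμ/(α(1-μ)))(3(F x_t - F x*) + 2(F x_{t+1} - F x*) + 5γΔ)` for any `β > 0`. -/
theorem myopic_cross_term_bound {n : ℕ}
    (U V : Set (EuclideanSpace ℝ (Fin n)))
    (μ : ℝ) (hμ0 : 0 < μ) (hμ1 : μ < 1)
    (hinc : ∀ u ∈ U, ∀ u' ∈ U, ∀ v ∈ V, ∀ v' ∈ V,
      |⟪u - u', v - v'⟫| ≤ μ * ‖u - u'‖ * ‖v - v'‖)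
    (F : EuclideanSpace ℝ (Fin n) → ℝ)
    (gradF : EuclideanSpace ℝ (Fin n) → EuclideanSpace ℝ (Fin n))
    (hgrad : ∀ x, HasGradientAt F (gradF x) x)
    (S : Set (EuclideanSpace ℝ (Fin n)))
    (hS : S = {x | ∃ u ∈ U, ∃ v ∈ V, x = u + v})
    (α : ℝ) (hα : 0 < α)
    (hRSC : ∀ x ∈ S, ∀ y ∈ S,
      α / 2 * ‖y - x‖ ^ 2 ≤ F y - F x - ⟪gradF x, y - x⟫)
    (ustar vstar xstar : EuclideanSpace ℝ (Fin n))
    (hustar : ustar ∈ U) (hvstar : vstar ∈ V) (hxstar : xstar = ustar + vstar)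
    (γ Δ : ℝ) (hγ : ‖gradF xstar‖ ≤ γ)
    (hmin : ∀ x ∈ S, F xstar ≤ F x)
    (hΔ : ∀ x ∈ S, ‖x - xstar‖ ≤ Δ)
    (ut ut1 : EuclideanSpace ℝ (Fin n)) (hut : ut ∈ U) (hut1 : ut1 ∈ U)
    (vt vt1 : EuclideanSpace ℝ (Fin n)) (hvt : vt ∈ V) (hvt1 : vt1 ∈ V)
    (xt xt1 : EuclideanSpace ℝ (Fin n))
    (hxt : xt = ut + vt) (hxt1 : xt1 = ut1 + vt1)
    (β : ℝ) (hβ : 0 < β) :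
    β * (⟪ut1 - ut, vt1 - vt⟫ - ⟪ustar - ut, vstar - vt⟫) ≤
      β * μ / (α * (1 - μ)) *
        (3 * (F xt - F xstar) + 2 * (F xt1 - F xstar) + 5 * (γ * Δ)) := by
  have hxsS : xstar ∈ S := by rw [hS]; exact ⟨ustar, hustar, vstar, hvstar, hxstar⟩
  have hxtS : xt ∈ S := by rw [hS]; exact ⟨ut, hut, vt, hvt, hxt⟩
  have hxt1S : xt1 ∈ S := by rw [hS]; exact ⟨ut1, hut1, vt1, hvt1, hxt1⟩
  have hΔ0 : 0 ≤ Δ := le_trans (by simp) (hΔ xstar hxsS)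
  have hγ0 : 0 ≤ γ := le_trans (norm_nonneg _) hγ
  -- key RSC bound
  have key : ∀ y ∈ S, α * ‖y - xstar‖ ^ 2 ≤ 2 * (F y - F xstar) + 2 * (γ * Δ) := by
    intro y hy
    have h1 := hRSC xstar hxsS y hy
    have h2 : |⟪gradF xstar, y - xstar⟫| ≤ γ * Δ := by
      calc |⟪gradF xstar, y - xstar⟫| ≤ ‖gradF xstar‖ * ‖y - xstar‖ :=
            abs_real_inner_le_norm _ _
        _ ≤ γ * Δ := mul_le_mul hγ (hΔ y hy) (norm_nonneg _) hγ0
    have h3 := abs_le.mp h2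
    nlinarith [h3.1, h3.2]
  set c1 := ⟪ut1 - ut, vt1 - vt⟫ with hc1
  set c2 := ⟪ustar - ut, vstar - vt⟫ with hc2
  have h1 : 2 * (1 - μ) * |c1| ≤ μ * ‖xt1 - xt‖ ^ 2 := by
    rw [hxt1, hxt]; exact cross_aux μ hμ0 hμ1 _ _ _ _ (hinc ut1 hut1 ut hut vt1 hvt1 vt hvt)
  have h2 : 2 * (1 - μ) * |c2| ≤ μ * ‖xstar - xt‖ ^ 2 := by
    rw [hxstar, hxt]; exact cross_aux μ hμ0 hμ1 _ _ _ _ (hinc ustar hustar ut hut vstar hvstar vt hvt)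
  have k1 := key xt hxtS
  have k2 := key xt1 hxt1S
  have h3 : ‖xt1 - xt‖ ^ 2 ≤ 2 * ‖xt1 - xstar‖ ^ 2 + 2 * ‖xt - xstar‖ ^ 2 := by
    have e : xt1 - xt = (xt1 - xstar) - (xt - xstar) := by abel
    have := norm_sub_le (xt1 - xstar) (xt - xstar)
    rw [e]
    nlinarith [sq_nonneg (‖xt1 - xstar‖ - ‖xt - xstar‖), norm_nonneg (xt1 - xstar),
      norm_nonneg (xt - xstar), this, norm_nonneg ((xt1 - xstar) - (xt - xstar))]
  have hrev : ‖xstar - xt‖ = ‖xt - xstar‖ := norm_sub_rev _ _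
  rw [hrev] at h2
  have habs1 : c1 ≤ |c1| := le_abs_self c1
  have habs2 : -c2 ≤ |c2| := neg_le_abs c2
  have A1 := mul_le_mul_of_nonneg_left h1 hα.le
  have A2 := mul_le_mul_of_nonneg_left h2 hα.le
  have A3 := mul_le_mul_of_nonneg_left h3 (mul_pos hα hμ0).le
  have A4 := mul_le_mul_of_nonneg_left k1 hμ0.le
  have A5 := mul_le_mul_of_nonneg_left k2 hμ0.le
  have habspos1 := mul_le_mul_of_nonneg_left habs1 (mul_pos hα (sub_pos.mpr hμ1)).le
  have habspos2 := mul_le_mul_of_nonneg_left habs2 (mul_pos hα (sub_pos.mpr hμ1)).le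
  have hmain : (1 - μ) * α * (c1 - c2) ≤
      μ * (3 * (F xt - F xstar) + 2 * (F xt1 - F xstar) + 5 * (γ * Δ)) := by
    linarith [A1, A2, A3, A4, A5, habspos1, habspos2]
  have hpos : 0 < α * (1 - μ) := mul_pos hα (sub_pos.mpr hμ1)
  rw [div_mul_eq_mul_div, le_div_iff₀ hpos]
  linarith [mul_le_mul_of_nonneg_left hmain hβ.le]
end

section
/- Let U, V ⊆ ℝⁿ be μ-incoherent with 0 < μ < 1, let F : ℝⁿ → ℝ be differentiable with gradient ∇F satisfying restricted strong convexity with constant α > 0 and restricted strong smoothness with constant β ≥ α over the Minkowski sum S = U ⊕ V. Let P be an ε-approximate projection onto U and Q an exact projection onto V (Q(w) ∈ V and ‖w - Q(w)‖ ≤ ‖w - v‖ for all v ∈ V). Suppose x* = u* + v* ∈ S (u* ∈ U, v* ∈ V) minimizes F over S with ‖∇F(x*)‖ ≤ γ, and the diameter of S is at most Δ. Given u_t ∈ U, v_t ∈ V, x_t = u_t + v_t, define the myopic PGD update u_{t+1} = P(u_t - (1/β)∇F(x_t)), v_{t+1} = Q(v_t - (1/β)∇F(x_t)), x_{t+1}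 = u_{t+1} + v_{t+1}. Then (1 - 2βμ/(α(1-μ)))·(F(x_{t+1}) - F(x*)) ≤ (β/α - 1 + 3βμ/(α(1-μ)))·(F(x_t) - F(x*)) + βε/2 + ((β - α)/α)·γΔ + (5βμ/(α(1-μ)))·γΔ. -/
open RealInnerProductSpace


private lemma sq_tri_aux (x y z : ℝ) (hx : 0 ≤ x) (t : x ≤ y + z) :
    x ^ 2 ≤ 2 * y ^ 2 + 2 * z ^ 2 := by
  nlinarith [sq_nonneg (y - z), sq_nonneg (y + z - x), sq_nonneg (y + z + x)]

set_option maxHeartbeats 1000000 in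
private lemma final_arith
    (α β μ ε γ Δ D1 D2 a1 b1 a2 b2 p1 p2 C tu tv su sv : ℝ)
    (hα : 0 < α) (hαβ : α ≤ β) (hμ0 : 0 < μ) (hμ1 : μ < 1)
    (hrss : D2 - D1 - (tu + tv) ≤ β / 2 * (a2 ^ 2 + 2 * p2 + b2 ^ 2))
    (hrsc : α / 2 * (a1 ^ 2 + 2 * p1 + b1 ^ 2) ≤ -D1 - (su + sv))
    (hPs : β / 2 * a2 ^ 2 + tu ≤ β / 2 * a1 ^ 2 + su + β * ε / 2)
    (hQs : β / 2 * b2 ^ 2 + tv ≤ β / 2 * b1 ^ 2 + sv)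
    (hp1l : -(μ * a1 * b1) ≤ p1)
    (hp2u : p2 ≤ μ * a2 * b2)
    (hp2l : -(μ * a2 * b2) ≤ p2)
    (F4 : α * (a1 ^ 2 + 2 * p1 + b1 ^ 2) ≤ 2 * D1 + 2 * (γ * Δ))
    (F5 : α * C ≤ 2 * D2 + 2 * (γ * Δ))
    (F6 : a2 ^ 2 + 2 * p2 + b2 ^ 2 ≤ 2 * (a1 ^ 2 + 2 * p1 + b1 ^ 2) + 2 * C) :
    (1 - 2 * β * μ / (α * (1 - μ))) * D2 ≤
      (β / α - 1 + 3 * β * μ / (α * (1 - μ))) * D1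
        + β * ε / 2 + (β - α) / α * (γ * Δ)
        + 5 * β * μ / (α * (1 - μ)) * (γ * Δ) := by
  have hβ : 0 < β := hα.trans_le hαβ
  have hμ1' : 0 < 1 - μ := by linarith
  have F2 : (1 - μ) * (a1 ^ 2 + b1 ^ 2) ≤ a1 ^ 2 + 2 * p1 + b1 ^ 2 := by
    nlinarith [sq_nonneg (a1 - b1), hμ0.le]
  have s1 : 2 * p2 ≤ μ * (a2 ^ 2 + b2 ^ 2) := by
    nlinarith [sq_nonneg (a2 - b2), hμ0.le]
  have s2 : (1 - μ) * (a2 ^ 2 + b2 ^ 2) ≤ a2 ^ 2 + 2 * p2 + b2 ^ 2 := by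
    nlinarith [sq_nonneg (a2 - b2), hμ0.le]
  have F1 : D2 ≤ β / 2 * (a1 ^ 2 + b1 ^ 2) - α / 2 * (a1 ^ 2 + 2 * p1 + b1 ^ 2)
      + β * ε / 2 + β * p2 := by
    linarith
  have F7 : 2 * (1 - μ) * D2
      ≤ (β - α * (1 - μ)) * (a1 ^ 2 + 2 * p1 + b1 ^ 2) + (1 - μ) * β * ε
        + β * μ * (a2 ^ 2 + 2 * p2 + b2 ^ 2) := by
    have m1 := mul_le_mul_of_nonneg_left F1 (by linarith : (0:ℝ) ≤ 2 * (1 - μ))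
    have m2 := mul_le_mul_of_nonneg_left F2 hβ.le
    have m3 := mul_le_mul_of_nonneg_left s1 (mul_nonneg hμ1'.le hβ.le)
    have m4 := mul_le_mul_of_nonneg_left s2 (mul_nonneg hβ.le hμ0.le)
    linarith [m1, m2, m3, m4]
  have hcoef : 0 ≤ β - α * (1 - μ) := by
    have := mul_nonneg hα.le hμ0.le; linarith
  have n1 := mul_le_mul_of_nonneg_left F7 hα.le
  have n2 := mul_le_mul_of_nonneg_left F4 hcoef
  have n3 := mul_le_mul_of_nonneg_left F6 (mul_nonneg (mul_nonneg hβ.le hμ0.le) hα.le)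
  have n4 := mul_le_mul_of_nonneg_left F4 (mul_nonneg hβ.le hμ0.le)
  have n5 := mul_le_mul_of_nonneg_left F5 (mul_nonneg hβ.le hμ0.le)
  have hcl : (α * (1 - μ) - 2 * β * μ) * D2
      ≤ (β * (1 - μ) - α * (1 - μ) + 3 * β * μ) * D1
        + α * (1 - μ) * β * ε / 2 + (β - α) * (1 - μ) * (γ * Δ)
        + 5 * β * μ * (γ * Δ) := by
    linarith [n1, n2, n3, n4, n5]
  have hd : 0 < α * (1 - μ) := mul_pos hα hμ1'
  have key : (1 - 2 * β * μ / (α * (1 - μ))) * D2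
      - ((β / α - 1 + 3 * β * μ / (α * (1 - μ))) * D1
        + β * ε / 2 + (β - α) / α * (γ * Δ)
        + 5 * β * μ / (α * (1 - μ)) * (γ * Δ))
      = ((α * (1 - μ) - 2 * β * μ) * D2
        - ((β * (1 - μ) - α * (1 - μ) + 3 * β * μ) * D1
          + α * (1 - μ) * β * ε / 2 + (β - α) * (1 - μ) * (γ * Δ)
          + 5 * β * μ * (γ * Δ))) / (α * (1 - μ)) := by
    rw [eq_div_iff (by positivity : (α * (1 - μ)) ≠ 0)]
    field_simp [hα.ne', hμ1'.ne']
  have hfin := div_nonpos_of_nonpos_of_nonneg (by linarith : (α * (1 - μ) - 2 * β * μ) * D2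
        - ((β * (1 - μ) - α * (1 - μ) + 3 * β * μ) * D1
          + α * (1 - μ) * β * ε / 2 + (β - α) * (1 - μ) * (γ * Δ)
          + 5 * β * μ * (γ * Δ)) ≤ 0) hd.le
  linarith [key, hfin]

private lemma expand_aux {n : ℕ} (w u g : EuclideanSpace ℝ (Fin n)) (c : ℝ) :
    ‖(w - c • g) - u‖ ^ 2 = ‖u - w‖ ^ 2 + 2 * c * ⟪g, u - w⟫ + c ^ 2 * ‖g‖ ^ 2 := by
  have h : (w - c • g) - u = -((u - w) + c • g) := by module
  rw [h, norm_neg, norm_add_sq_real, real_inner_smul_right, real_inner_comm, norm_smul,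
    mul_pow, Real.norm_eq_abs, sq_abs]
  ring

/-- One iteration of Myopic ε-PGD: under `μ`-incoherence of `U, V`,
RSC/RSS of `F` over `S = U ⊕ V` with constants `0 < α ≤ β`, an `ε`-approximate projection
`P` onto `U`, an exact projection `Q` onto `V`, minimizer `x* = u* + v*` of `F` over `S`
with `‖∇F(x*)‖ ≤ γ`, and `diam S ≤ Δ`:
`(1 - 2βμ/(α(1-μ)))(F x_{t+1} - F x*)
  ≤ (β/α - 1 + 3βμ/(α(1-μ)))(F x_t - F x*) + βε/2 + ((β-α)/α)γΔ + (5βμ/(α(1-μ)))γΔ`. -/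
theorem myopic_epsPGD_one_step {n : ℕ}
    (U V : Set (EuclideanSpace ℝ (Fin n)))
    (μ : ℝ) (hμ0 : 0 < μ) (hμ1 : μ < 1)
    (hinc : ∀ u ∈ U, ∀ u' ∈ U, ∀ v ∈ V, ∀ v' ∈ V,
      |⟪u - u', v - v'⟫| ≤ μ * ‖u - u'‖ * ‖v - v'‖)
    (F : EuclideanSpace ℝ (Fin n) → ℝ)
    (gradF : EuclideanSpace ℝ (Fin n) → EuclideanSpace ℝ (Fin n))
    (hgrad : ∀ x, HasGradientAt F (gradF x) x)
    (S : Set (EuclideanSpace ℝ (Fin n)))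
    (hS : S = {x | ∃ u ∈ U, ∃ v ∈ V, x = u + v})
    (α β : ℝ) (hα : 0 < α) (hαβ : α ≤ β)
    (hRSC : ∀ x ∈ S, ∀ y ∈ S,
      α / 2 * ‖y - x‖ ^ 2 ≤ F y - F x - ⟪gradF x, y - x⟫)
    (hRSS : ∀ x ∈ S, ∀ y ∈ S,
      F y - F x - ⟪gradF x, y - x⟫ ≤ β / 2 * ‖y - x‖ ^ 2)
    (ε : ℝ) (hε : 0 ≤ ε)
    (P Q : EuclideanSpace ℝ (Fin n) → EuclideanSpace ℝ (Fin n))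
    (hP : ∀ w, P w ∈ U ∧ ∀ s ∈ U, ‖w - P w‖ ^ 2 ≤ ‖w - s‖ ^ 2 + ε)
    (hQ : ∀ w, Q w ∈ V ∧ ∀ s ∈ V, ‖w - Q w‖ ≤ ‖w - s‖)
    (ustar vstar xstar : EuclideanSpace ℝ (Fin n))
    (hustar : ustar ∈ U) (hvstar : vstar ∈ V) (hxstar : xstar = ustar + vstar)
    (hmin : ∀ x ∈ S, F xstar ≤ F x)
    (γ Δ : ℝ) (hγ : ‖gradF xstar‖ ≤ γ)
    (hΔ : ∀ a ∈ S, ∀ b ∈ S, ‖a - b‖ ≤ Δ)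
    (ut vt : EuclideanSpace ℝ (Fin n)) (hut : ut ∈ U) (hvt : vt ∈ V)
    (xt ut1 vt1 xt1 : EuclideanSpace ℝ (Fin n))
    (hxt : xt = ut + vt)
    (hut1 : ut1 = P (ut - (1 / β) • gradF xt))
    (hvt1 : vt1 = Q (vt - (1 / β) • gradF xt))
    (hxt1 : xt1 = ut1 + vt1) :
    (1 - 2 * β * μ / (α * (1 - μ))) * (F xt1 - F xstar) ≤
      (β / α - 1 + 3 * β * μ / (α * (1 - μ))) * (F xt - F xstar)
        + β * ε / 2 + (β - α) / α * (γ * Δ)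
        + 5 * β * μ / (α * (1 - μ)) * (γ * Δ) := by
  have hβ : 0 < β := hα.trans_le hαβ
  have hμ1' : 0 < 1 - μ := by linarith
  set g := gradF xt with hg
  have hut1U : ut1 ∈ U := hut1 ▸ (hP _).1
  have hvt1V : vt1 ∈ V := hvt1 ▸ (hQ _).1
  have hxtS : xt ∈ S := by rw [hS]; exact ⟨ut, hut, vt, hvt, hxt⟩
  have hxsS : xstar ∈ S := by rw [hS]; exact ⟨ustar, hustar, vstar, hvstar, hxstar⟩
  have hxt1S : xt1 ∈ S := by rw [hS]; exact ⟨ut1, hut1U, vt1, hvt1V, hxt1⟩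
  have hd1 : xstar - xt = (ustar - ut) + (vstar - vt) := by rw [hxstar, hxt]; abel
  have hd2 : xt1 - xt = (ut1 - ut) + (vt1 - vt) := by rw [hxt1, hxt]; abel
  -- projection step inequalities
  have id1 : ∀ u : EuclideanSpace ℝ (Fin n),
      β / 2 * ‖(ut - (1 / β) • g) - u‖ ^ 2
        = β / 2 * ‖u - ut‖ ^ 2 + ⟪g, u - ut⟫ + ‖g‖ ^ 2 / (2 * β) := by
    intro u
    rw [expand_aux]
    field_simp
  have id2 : ∀ v : EuclideanSpace ℝ (Fin n),
      β / 2 * ‖(vt - (1 / β) • g) - v‖ ^ 2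
        = β / 2 * ‖v - vt‖ ^ 2 + ⟪g, v - vt⟫ + ‖g‖ ^ 2 / (2 * β) := by
    intro v
    rw [expand_aux]
    field_simp
  have hPraw := (hP (ut - (1 / β) • g)).2 ustar hustar
  rw [← hut1] at hPraw
  have hPm := mul_le_mul_of_nonneg_left hPraw (by positivity : (0:ℝ) ≤ β / 2)
  have hPs : β / 2 * ‖ut1 - ut‖ ^ 2 + ⟪g, ut1 - ut⟫
      ≤ β / 2 * ‖ustar - ut‖ ^ 2 + ⟪g, ustar - ut⟫ + β * ε / 2 := by
    have e1 := id1 ut1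
    have e2 := id1 ustar
    linarith [hPm, e1, e2]
  have hQraw := (hQ (vt - (1 / β) • g)).2 vstar hvstar
  rw [← hvt1] at hQraw
  have hQsq : ‖(vt - (1 / β) • g) - vt1‖ ^ 2 ≤ ‖(vt - (1 / β) • g) - vstar‖ ^ 2 :=
    pow_le_pow_left₀ (norm_nonneg _) hQraw 2
  have hQm := mul_le_mul_of_nonneg_left hQsq (by positivity : (0:ℝ) ≤ β / 2)
  have hQs : β / 2 * ‖vt1 - vt‖ ^ 2 + ⟪g, vt1 - vt⟫
      ≤ β / 2 * ‖vstar - vt‖ ^ 2 + ⟪g, vstar - vt⟫ := by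
    have e1 := id2 vt1
    have e2 := id2 vstar
    linarith [hQm, e1, e2]
  -- expansions
  have exp1 : ‖xstar - xt‖ ^ 2
      = ‖ustar - ut‖ ^ 2 + 2 * ⟪ustar - ut, vstar - vt⟫ + ‖vstar - vt‖ ^ 2 := by
    rw [hd1, norm_add_sq_real]
  have exp2 : ‖xt1 - xt‖ ^ 2
      = ‖ut1 - ut‖ ^ 2 + 2 * ⟪ut1 - ut, vt1 - vt⟫ + ‖vt1 - vt‖ ^ 2 := by
    rw [hd2, norm_add_sq_real]
  have eqg1 : ⟪g, xstar - xt⟫ = ⟪g, ustar - ut⟫ + ⟪g, vstar - vt⟫ := by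
    rw [hd1, inner_add_right]
  have eqg2 : ⟪g, xt1 - xt⟫ = ⟪g, ut1 - ut⟫ + ⟪g, vt1 - vt⟫ := by
    rw [hd2, inner_add_right]
  -- incoherence bounds
  have hi1 := hinc ustar hustar ut hut vstar hvstar vt hvt
  have hi2 := hinc ut1 hut1U ut hut vt1 hvt1V vt hvt
  have hp1l : -(μ * ‖ustar - ut‖ * ‖vstar - vt‖) ≤ ⟪ustar - ut, vstar - vt⟫ :=
    neg_le_of_abs_le hi1
  have hp2u : ⟪ut1 - ut, vt1 - vt⟫ ≤ μ * ‖ut1 - ut‖ * ‖vt1 - vt‖ :=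
    le_trans (le_abs_self _) hi2
  have hp2l : -(μ * ‖ut1 - ut‖ * ‖vt1 - vt‖) ≤ ⟪ut1 - ut, vt1 - vt⟫ :=
    neg_le_of_abs_le hi2
  -- RSS / RSC
  have Hrss : (F xt1 - F xstar) - (F xt - F xstar) - (⟪g, ut1 - ut⟫ + ⟪g, vt1 - vt⟫)
      ≤ β / 2 * (‖ut1 - ut‖ ^ 2 + 2 * ⟪ut1 - ut, vt1 - vt⟫ + ‖vt1 - vt‖ ^ 2) := by
    have h := hRSS xt hxtS xt1 hxt1S
    rw [exp2, eqg2] at h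
    linarith
  have Hrsc : α / 2 * (‖ustar - ut‖ ^ 2 + 2 * ⟪ustar - ut, vstar - vt⟫ + ‖vstar - vt‖ ^ 2)
      ≤ -(F xt - F xstar) - (⟪g, ustar - ut⟫ + ⟪g, vstar - vt⟫) := by
    have h := hRSC xt hxtS xstar hxsS
    rw [exp1, eqg1] at h
    linarith
  -- distance bounds
  have hγ0 : 0 ≤ γ := le_trans (norm_nonneg _) hγ
  have HF4 : α * (‖ustar - ut‖ ^ 2 + 2 * ⟪ustar - ut, vstar - vt⟫ + ‖vstar - vt‖ ^ 2)
      ≤ 2 * (F xt - F xstar) + 2 * (γ * Δ) := by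
    have h := hRSC xstar hxsS xt hxtS
    have e : ‖xt - xstar‖ ^ 2
        = ‖ustar - ut‖ ^ 2 + 2 * ⟪ustar - ut, vstar - vt⟫ + ‖vstar - vt‖ ^ 2 := by
      rw [norm_sub_rev, exp1]
    rw [e] at h
    have hip := abs_real_inner_le_norm (gradF xstar) (xt - xstar)
    have hprod : ‖gradF xstar‖ * ‖xt - xstar‖ ≤ γ * Δ :=
      mul_le_mul hγ (hΔ xt hxtS xstar hxsS) (norm_nonneg _) hγ0
    have hlow := neg_abs_le (⟪gradF xstar, xt - xstar⟫)
    linarith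
  have HF5 : α * ‖xt1 - xstar‖ ^ 2 ≤ 2 * (F xt1 - F xstar) + 2 * (γ * Δ) := by
    have h := hRSC xstar hxsS xt1 hxt1S
    have hip := abs_real_inner_le_norm (gradF xstar) (xt1 - xstar)
    have hprod : ‖gradF xstar‖ * ‖xt1 - xstar‖ ≤ γ * Δ :=
      mul_le_mul hγ (hΔ xt1 hxt1S xstar hxsS) (norm_nonneg _) hγ0
    have hlow := neg_abs_le (⟪gradF xstar, xt1 - xstar⟫)
    linarith
  have HF6 : ‖ut1 - ut‖ ^ 2 + 2 * ⟪ut1 - ut, vt1 - vt⟫ + ‖vt1 - vt‖ ^ 2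
      ≤ 2 * (‖ustar - ut‖ ^ 2 + 2 * ⟪ustar - ut, vstar - vt⟫ + ‖vstar - vt‖ ^ 2)
        + 2 * ‖xt1 - xstar‖ ^ 2 := by
    have tri : ‖xt1 - xt‖ ≤ ‖xstar - xt‖ + ‖xt1 - xstar‖ := by
      have h := dist_triangle xt1 xstar xt
      rw [dist_eq_norm, dist_eq_norm] at h
      calc ‖xt1 - xt‖ ≤ ‖xt1 - xstar‖ + ‖xstar - xt‖ := h
        _ = ‖xstar - xt‖ + ‖xt1 - xstar‖ := by ring
    have h := sq_tri_aux ‖xt1 - xt‖ ‖xstar - xt‖ ‖xt1 - xstar‖ (norm_nonneg _) tri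
    rw [exp1, exp2] at h
    linarith
  exact final_arith α β μ ε γ Δ (F xt - F xstar) (F xt1 - F xstar)
    ‖ustar - ut‖ ‖vstar - vt‖ ‖ut1 - ut‖ ‖vt1 - vt‖
    (⟪ustar - ut, vstar - vt⟫) (⟪ut1 - ut, vt1 - vt⟫) (‖xt1 - xstar‖ ^ 2)
    (⟪g, ut1 - ut⟫) (⟪g, vt1 - vt⟫) (⟪g, ustar - ut⟫) (⟪g, vstar - vt⟫)
    hα hαβ hμ0 hμ1 Hrss Hrsc hPs hQs hp1l hp2u hp2l HF4 HF5 HF6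
end

section
/- Let S ⊆ ℝⁿ, ε ≥ 0, and let P be an ε-approximate projection onto S. Let F : ℝⁿ → ℝ be differentiable with gradient ∇F satisfying restricted strong smoothness over S with constant β > 0, let x, x* ∈ S, set z = x - (1/β)∇F(x) and x⁺ = P(z). Then F(x⁺) - F(x) ≤ (β/2)(‖x* - z‖² - ‖x - z‖²) + βε/2. -/
open RealInnerProductSpace

/-- With RSS over `S` (constant `β > 0`), an `ε`-approximate projection
`P` onto `S`, `x, x* ∈ S`, `z = x - (1/β)∇F(x)` and `x⁺ = P z`:
`F x⁺ - F x ≤ (β/2)(‖x* - z‖² - ‖x - z‖²) + βε/2`. -/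
theorem rss_approx_projection_distance_step {n : ℕ}
    (S : Set (EuclideanSpace ℝ (Fin n))) (ε : ℝ) (hε : 0 ≤ ε)
    (P : EuclideanSpace ℝ (Fin n) → EuclideanSpace ℝ (Fin n))
    (hP : ∀ w, P w ∈ S ∧ ∀ s ∈ S, ‖w - P w‖ ^ 2 ≤ ‖w - s‖ ^ 2 + ε)
    (F : EuclideanSpace ℝ (Fin n) → ℝ)
    (gradF : EuclideanSpace ℝ (Fin n) → EuclideanSpace ℝ (Fin n))
    (hgrad : ∀ x, HasGradientAt F (gradF x) x)
    (β : ℝ) (hβ : 0 < β)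
    (hRSS : ∀ x ∈ S, ∀ y ∈ S,
      F y - F x - ⟪gradF x, y - x⟫ ≤ β / 2 * ‖y - x‖ ^ 2)
    (x xstar : EuclideanSpace ℝ (Fin n)) (hx : x ∈ S) (hxstar : xstar ∈ S)
    (z xplus : EuclideanSpace ℝ (Fin n))
    (hz : z = x - (1 / β) • gradF x) (hxplus : xplus = P z) :
    F xplus - F x ≤ β / 2 * (‖xstar - z‖ ^ 2 - ‖x - z‖ ^ 2) + β * ε / 2 := by
  have hxplusS : xplus ∈ S := hxplus ▸ (hP z).1
  have hproj : ‖z - xplus‖ ^ 2 ≤ ‖z - xstar‖ ^ 2 + ε := hxplus ▸ (hP z).2 xstar hxstar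
  have hgx : gradF x = β • (x - z) := by
    rw [hz]
    rw [sub_sub_cancel, smul_smul]
    rw [mul_one_div, div_self hβ.ne', one_smul]
  have hrss := hRSS x hx xplus hxplusS
  have hinner : ⟪gradF x, xplus - x⟫ = β * ⟪x - z, xplus - x⟫ := by
    rw [hgx, real_inner_smul_left]
  have e1 : ‖xplus - z‖ ^ 2 = ‖xplus - x‖ ^ 2 + 2 * ⟪xplus - x, x - z⟫ + ‖x - z‖ ^ 2 := by
    have := norm_add_sq_real (xplus - x) (x - z)
    rw [sub_add_sub_cancel] at this
    exact this
  have hsym : ⟪x - z, xplus - x⟫ = ⟪xplus - x, x - z⟫ := real_inner_comm _ _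
  have h1 : ‖z - xplus‖ = ‖xplus - z‖ := norm_sub_rev _ _
  have h2 : ‖z - xstar‖ = ‖xstar - z‖ := norm_sub_rev _ _
  rw [h1, h2] at hproj
  nlinarith [hrss, hproj, e1]
end
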